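/- arXiv:2605.25352 — 2 statements merged into one kernel-verified Lean document; each statement's English description precedes it below -/
import Mathlib

section
/- (Theorem 4.1, robustness certificate.) Let x ∈ ℝ^d be a point at which the ELLIPS score has a unique maximizing class i_*, with margin m(x) > 0, and suppose c_M(x) > 0, where c_M(x) = max_{i≠i_*} ‖Σ_{i_*}⁻¹(x−μ_{i_*}) − Σ_i⁻¹(x−μ_i)‖₂, and let λ_min = min_{i≠i_*} λ_min(Σ_i⁻¹ − Σ_{i_*}⁻¹). Then for every x' ∈ ℝ^d with ‖x'−x‖₂ ≤ m(x) / ( √(c_M(x)² + (−λ_min)_+ · m(x)) + c_M(x) ), one has score(x', i_*) ≥ score(x', i) for every i ≠ i_*; in particular the ELLIPS classification of x' agrees with that of x. Here (t)_+ = max(t,0). -/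
open Matrix Real

/-- The Euclidean (ℓ₂) norm of a vector in `Fin d → ℝ`. -/
noncomputable def l2norm {d : ℕ} (v : Fin d → ℝ) : ℝ :=
  Real.sqrt (v ⬝ᵥ v)

/-- The smallest eigenvalue of a symmetric matrix, given by the Rayleigh quotient
characterization: the infimum of `vᵀ M v` over unit vectors `v`. -/
noncomputable def minEig {d : ℕ} (M : Matrix (Fin d) (Fin d) ℝ) : ℝ :=
  ⨅ v : {v : Fin d → ℝ // v ⬝ᵥ v = 1}, (v : Fin d → ℝ) ⬝ᵥ (M *ᵥ (v : Fin d → ℝ))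

/-- The ELLIPS score of class `i` at point `x`:
`score(x, i) = −(x−μᵢ)ᵀΣᵢ⁻¹(x−μᵢ) − log det Σᵢ + 2 log πᵢ`. -/
noncomputable def score {d K : ℕ} (μ : Fin K → Fin d → ℝ)
    (S : Fin K → Matrix (Fin d) (Fin d) ℝ) (pri : Fin K → ℝ)
    (x : Fin d → ℝ) (i : Fin K) : ℝ :=
  -((x - μ i) ⬝ᵥ ((S i)⁻¹ *ᵥ (x - μ i))) - Real.log (S i).det + 2 * Real.log (pri i)

/-!
Write `x' = x + δ`. The score of class `i` changes by `-2 δ ⬝ᵥ Σᵢ⁻¹ (x - μᵢ) - δ ⬝ᵥ Σᵢ⁻¹ δ`, so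
the advantage of `i_*` over `i` drops by at most `2 c_M ‖δ‖` (Cauchy–Schwarz on the linear terms)
plus `(-λ_min)₊ ‖δ‖²` (Rayleigh bound for `δ ⬝ᵥ (Σᵢ⁻¹ - Σ_{i_*}⁻¹) δ`). The certified radius is
the positive root of `2 c_M r + (-λ_min)₊ r² = m(x)`, so inside it the margin is never used up.
-/

lemma l2norm_eq_norm_toLp {d : ℕ} (v : Fin d → ℝ) :
    l2norm v = ‖WithLp.toLp 2 v‖ := by
  rw [norm_eq_sqrt_real_inner, EuclideanSpace.inner_toLp_toLp]
  rfl

lemma l2norm_nonneg {d : ℕ} (v : Fin d → ℝ) : 0 ≤ l2norm v := Real.sqrt_nonneg _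

lemma l2norm_sq {d : ℕ} (v : Fin d → ℝ) : l2norm v ^ 2 = v ⬝ᵥ v :=
  Real.sq_sqrt (by simpa using dotProduct_star_self_nonneg v)

lemma dotProduct_le_l2norm_mul_l2norm {d : ℕ} (v w : Fin d → ℝ) :
    v ⬝ᵥ w ≤ l2norm v * l2norm w := by
  rw [l2norm_eq_norm_toLp, l2norm_eq_norm_toLp, dotProduct_comm]
  exact real_inner_le_norm (WithLp.toLp 2 v) (WithLp.toLp 2 w)

section

variable {n : Type*} [Fintype n]

lemma abs_le_one_of_dotProduct_self_eq_one {v : n → ℝ} (hv : v ⬝ᵥ v = 1) (k : n) :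
    |v k| ≤ 1 := by
  have : v k * v k ≤ v ⬝ᵥ v :=
    Finset.single_le_sum (fun i _ => mul_self_nonneg (v i)) (Finset.mem_univ k)
  rw [hv] at this
  exact abs_le_one_iff_mul_self_le_one.mpr this

lemma isCompact_setOf_dotProduct_self_eq_one :
    IsCompact {v : n → ℝ | v ⬝ᵥ v = 1} := by
  refine Metric.isCompact_of_isClosed_isBounded (isClosed_eq (by fun_prop) continuous_const) ?_
  refine (Metric.isBounded_iff_subset_closedBall 0).mpr ⟨1, fun v hv => ?_⟩
  rw [mem_closedBall_zero_iff]
  exact (pi_norm_le_iff_of_nonneg zero_le_one).mpr (abs_le_one_of_dotProduct_self_eq_one hv)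

lemma add_dotProduct_mulVec_add {A : Matrix n n ℝ} (hA : Aᵀ = A)
    (u v : n → ℝ) :
    (u + v) ⬝ᵥ (A *ᵥ (u + v)) = u ⬝ᵥ (A *ᵥ u) + 2 * (u ⬝ᵥ (A *ᵥ v)) + v ⬝ᵥ (A *ᵥ v) := by
  have hsymm : v ⬝ᵥ (A *ᵥ u) = u ⬝ᵥ (A *ᵥ v) := by
    rw [dotProduct_mulVec, ← mulVec_transpose, hA, dotProduct_comm]
  simp only [mulVec_add, dotProduct_add, add_dotProduct, hsymm]
  ring

end

lemma bddBelow_range_rayleigh {d : ℕ} (M : Matrix (Fin d) (Fin d) ℝ) :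
    BddBelow (Set.range fun v : {v : Fin d → ℝ // v ⬝ᵥ v = 1} =>
      (v : Fin d → ℝ) ⬝ᵥ (M *ᵥ (v : Fin d → ℝ))) := by
  have := isCompact_setOf_dotProduct_self_eq_one.bddBelow_image
    (f := fun v : Fin d → ℝ => v ⬝ᵥ (M *ᵥ v)) (by fun_prop)
  rwa [Set.image_eq_range] at this

lemma minEig_mul_l2norm_sq_le {d : ℕ} (M : Matrix (Fin d) (Fin d) ℝ) (v : Fin d → ℝ) :
    minEig M * l2norm v ^ 2 ≤ v ⬝ᵥ (M *ᵥ v) := by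
  rcases (l2norm_nonneg v).eq_or_lt with hv | hv
  · obtain rfl : v = 0 := dotProduct_self_eq_zero.mp (by rw [← l2norm_sq, ← hv]; ring)
    simp [← hv]
  set u := (l2norm v)⁻¹ • v
  have hu : u ⬝ᵥ u = 1 := by
    rw [smul_dotProduct, dotProduct_smul, ← l2norm_sq, smul_eq_mul, smul_eq_mul]
    field_simp
  have hle : minEig M ≤ u ⬝ᵥ (M *ᵥ u) := ciInf_le (bddBelow_range_rayleigh M) ⟨u, hu⟩
  rw [mulVec_smul, smul_dotProduct, dotProduct_smul, smul_eq_mul, smul_eq_mul] at hle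
  rw [← le_div_iff₀ (by positivity)]
  exact hle.trans_eq (by ring)

lemma two_mul_mul_add_mul_sq_le_of_le_div {c L m r : ℝ} (hc : 0 < c) (hL : 0 ≤ L) (hr : 0 ≤ r)
    (hrm : r ≤ m / (√(c ^ 2 + L * m) + c)) :
    2 * c * r + L * r ^ 2 ≤ m := by
  set s := √(c ^ 2 + L * m)
  have hsc : 0 < s + c := by positivity
  have hrs : r * (s + c) ≤ m := (le_div_iff₀ hsc).mp hrm
  have hm : 0 ≤ m := (mul_nonneg hr hsc.le).trans hrs
  have hs : s ^ 2 = c ^ 2 + L * m := Real.sq_sqrt (by positivity)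
  -- `L r ≤ s - c` because `L r (s + c) ≤ L m = s² - c²`
  have hLr : L * r ≤ s - c := by nlinarith [mul_le_mul_of_nonneg_left hrs hL]
  nlinarith [mul_le_mul_of_nonneg_left hLr hr]

lemma score_add {d K : ℕ} (μ : Fin K → Fin d → ℝ) (S : Fin K → Matrix (Fin d) (Fin d) ℝ)
    (pri : Fin K → ℝ) {i : Fin K} (hS : ((S i)⁻¹)ᵀ = (S i)⁻¹) (x δ : Fin d → ℝ) :
    score μ S pri (x + δ) i =
      score μ S pri x i - 2 * (δ ⬝ᵥ ((S i)⁻¹ *ᵥ (x - μ i))) - δ ⬝ᵥ ((S i)⁻¹ *ᵥ δ) := by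
  rw [score, score, show x + δ - μ i = δ + (x - μ i) by abel, add_dotProduct_mulVec_add hS]
  ring

theorem stmt6_general {d K : ℕ}
    (μ : Fin K → Fin d → ℝ) (S : Fin K → Matrix (Fin d) (Fin d) ℝ)
    (pri : Fin K → ℝ) (hS : ∀ i, (S i).PosDef)
    (x : Fin d → ℝ) (istar : Fin K)
    (m cM lam : ℝ)
    (hm : m = score μ S pri x istar - ⨆ i : {i : Fin K // i ≠ istar}, score μ S pri x i)
    (hcM : cM = ⨆ i : {i : Fin K // i ≠ istar},
      l2norm ((S istar)⁻¹ *ᵥ (x - μ istar) - (S i)⁻¹ *ᵥ (x - μ i)))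
    (hlam : lam = ⨅ i : {i : Fin K // i ≠ istar}, minEig ((S i)⁻¹ - (S istar)⁻¹))
    (hcMpos : 0 < cM) :
    ∀ x' : Fin d → ℝ,
      l2norm (x' - x) ≤ m / (Real.sqrt (cM ^ 2 + max (-lam) 0 * m) + cM) →
      ∀ i, i ≠ istar → score μ S pri x' i ≤ score μ S pri x' istar := by
  intro x' hx' i hi
  obtain ⟨δ, rfl⟩ : ∃ δ, x' = x + δ := ⟨x' - x, by abel⟩
  rw [add_sub_cancel_left] at hx'
  have hsymm (j : Fin K) : ((S j)⁻¹)ᵀ = (S j)⁻¹ := (hS j).isHermitian.inv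
  have hmargin : score μ S pri x i + m ≤ score μ S pri x istar := by
    have : score μ S pri x i ≤ ⨆ j : {j // j ≠ istar}, score μ S pri x j :=
      le_ciSup_of_le (Finite.bddAbove_range _) ⟨i, hi⟩ le_rfl
    linarith
  have hcM_le : l2norm ((S istar)⁻¹ *ᵥ (x - μ istar) - (S i)⁻¹ *ᵥ (x - μ i)) ≤ cM := by
    rw [hcM]
    exact le_ciSup_of_le (Finite.bddAbove_range _) ⟨i, hi⟩ le_rfl
  have hcross := (dotProduct_le_l2norm_mul_l2norm δ _).trans
    (mul_le_mul_of_nonneg_left hcM_le (l2norm_nonneg δ))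
  have hquad : -max (-lam) 0 * l2norm δ ^ 2 ≤ δ ⬝ᵥ (((S i)⁻¹ - (S istar)⁻¹) *ᵥ δ) := by
    have hlam_le : lam ≤ minEig ((S i)⁻¹ - (S istar)⁻¹) := by
      rw [hlam]
      exact ciInf_le_of_le (Finite.bddBelow_range _) ⟨i, hi⟩ le_rfl
    refine le_trans ?_ (minEig_mul_l2norm_sq_le _ δ)
    gcongr
    linarith [le_max_left (-lam) 0]
  have hcert := two_mul_mul_add_mul_sq_le_of_le_div hcMpos (le_max_right _ _) (l2norm_nonneg δ) hx'
  rw [score_add μ S pri (hsymm i), score_add μ S pri (hsymm istar)]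
  rw [dotProduct_sub] at hcross
  rw [sub_mulVec, dotProduct_sub] at hquad
  linarith

theorem stmt6 {d K : ℕ} (hd : 1 ≤ d) (hK : 2 ≤ K)
    (μ : Fin K → Fin d → ℝ) (S : Fin K → Matrix (Fin d) (Fin d) ℝ)
    (pri : Fin K → ℝ) (hpri : ∀ i, 0 < pri i) (hS : ∀ i, (S i).PosDef)
    (x : Fin d → ℝ) (istar : Fin K)
    (hmaxUnique : ∀ i, i ≠ istar → score μ S pri x i < score μ S pri x istar)
    (m cM lam : ℝ)
    (hm : m = score μ S pri x istar - ⨆ i : {i : Fin K // i ≠ istar}, score μ S pri x i)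
    (hcM : cM = ⨆ i : {i : Fin K // i ≠ istar},
      l2norm ((S istar)⁻¹ *ᵥ (x - μ istar) - (S i)⁻¹ *ᵥ (x - μ i)))
    (hlam : lam = ⨅ i : {i : Fin K // i ≠ istar}, minEig ((S i)⁻¹ - (S istar)⁻¹))
    (hmpos : 0 < m) (hcMpos : 0 < cM) :
    ∀ x' : Fin d → ℝ,
      l2norm (x' - x) ≤ m / (Real.sqrt (cM ^ 2 + max (-lam) 0 * m) + cM) →
      ∀ i, i ≠ istar → score μ S pri x' i ≤ score μ S pri x' istar :=
  stmt6_general μ S pri hS x istar m cM lam hm hcM hlam hcMpos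
end

section
/- (Deterministic form of Lemma E.1.) Let Σ and Σ̂ be symmetric positive definite d×d real matrices and let μ, μ̂, x ∈ ℝ^d. Write Δμ = μ̂ − μ, ‖v‖_{Σ⁻¹} = √(vᵀΣ⁻¹v), and ‖·‖_op for the operator norm induced by the Euclidean norm. Then |(x−μ)ᵀΣ⁻¹(x−μ) − (x−μ̂)ᵀΣ̂⁻¹(x−μ̂)| ≤ 2‖Δμ‖_{Σ⁻¹}·‖x−μ‖_{Σ⁻¹} + ‖Δμ‖_{Σ⁻¹}² + 2(‖x−μ‖₂² + ‖Δμ‖₂²)·‖Σ̂⁻¹ − Σ⁻¹‖_op. -/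
open Matrix Real

/-- The norm `‖v‖_{Σ⁻¹} = √(vᵀ Σ⁻¹ v)` induced by the inverse of a positive definite matrix. -/
noncomputable def invNorm {d : ℕ} (S : Matrix (Fin d) (Fin d) ℝ) (v : Fin d → ℝ) : ℝ :=
  Real.sqrt (v ⬝ᵥ (S⁻¹ *ᵥ v))

/-- The operator norm of a matrix with respect to the Euclidean norm, as the supremum of
`‖M v‖₂` over the closed Euclidean unit ball. -/
noncomputable def opNorm {d : ℕ} (M : Matrix (Fin d) (Fin d) ℝ) : ℝ :=
  ⨆ v : {v : Fin d → ℝ // v ⬝ᵥ v ≤ 1}, l2norm (M *ᵥ (v : Fin d → ℝ))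

/-!
Put `a = x - μ` and `δ = μ̂ - μ`, so that `x - μ̂ = a - δ`. Since `Σ⁻¹` is symmetric,
`aᵀΣ⁻¹a - (a - δ)ᵀΣ̂⁻¹(a - δ) = (2 aᵀΣ⁻¹δ - δᵀΣ⁻¹δ) - (a - δ)ᵀ(Σ̂⁻¹ - Σ⁻¹)(a - δ)`.
The first bracket is bounded by Cauchy–Schwarz for the inner product `Σ⁻¹`, the second by
`‖Σ̂⁻¹ - Σ⁻¹‖_op ‖a - δ‖₂²` together with the parallelogram law `‖a - δ‖₂² ≤ 2(‖a‖₂² + ‖δ‖₂²)`.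
-/

section QuadraticForm

variable {n : Type*} [Fintype n] {A : Matrix n n ℝ}

lemma Matrix.PosSemidef.abs_dotProduct_mulVec_le (hA : A.PosSemidef) (v w : n → ℝ) :
    |v ⬝ᵥ A *ᵥ w| ≤ √(v ⬝ᵥ A *ᵥ v) * √(w ⬝ᵥ A *ᵥ w) := by
  let _ := A.toSeminormedAddCommGroup hA
  let _ := A.toInnerProductSpace hA
  have h : |(A *ᵥ w) ⬝ᵥ v| ≤ √((A *ᵥ v) ⬝ᵥ v) * √((A *ᵥ w) ⬝ᵥ w) :=
    abs_real_inner_le_norm v w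
  simpa only [dotProduct_comm _ v, dotProduct_comm _ w] using h

lemma Matrix.IsHermitian.dotProduct_mulVec_comm (hA : A.IsHermitian) (v w : n → ℝ) :
    v ⬝ᵥ A *ᵥ w = w ⬝ᵥ A *ᵥ v := by
  rw [dotProduct_mulVec, ← mulVec_transpose, ← conjTranspose_eq_transpose_of_trivial, hA.eq,
    dotProduct_comm]

lemma Matrix.IsHermitian.dotProduct_mulVec_sub_dotProduct_mulVec_sub (hA : A.IsHermitian)
    (B : Matrix n n ℝ) (a δ : n → ℝ) :
    a ⬝ᵥ A *ᵥ a - (a - δ) ⬝ᵥ B *ᵥ (a - δ) =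
      2 * (a ⬝ᵥ A *ᵥ δ) - δ ⬝ᵥ A *ᵥ δ - (a - δ) ⬝ᵥ (B - A) *ᵥ (a - δ) := by
  simp only [sub_mulVec, mulVec_sub, dotProduct_sub, sub_dotProduct, hA.dotProduct_mulVec_comm δ a]
  ring

lemma Matrix.PosSemidef.abs_two_mul_dotProduct_mulVec_sub_le (hA : A.PosSemidef) (a δ : n → ℝ) :
    |2 * (a ⬝ᵥ A *ᵥ δ) - δ ⬝ᵥ A *ᵥ δ| ≤
      2 * √(δ ⬝ᵥ A *ᵥ δ) * √(a ⬝ᵥ A *ᵥ a) + √(δ ⬝ᵥ A *ᵥ δ) ^ 2 := by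
  have hδ : 0 ≤ δ ⬝ᵥ A *ᵥ δ := by simpa using hA.dotProduct_mulVec_nonneg δ
  have hcs := hA.abs_dotProduct_mulVec_le a δ
  calc |2 * (a ⬝ᵥ A *ᵥ δ) - δ ⬝ᵥ A *ᵥ δ| ≤ 2 * |a ⬝ᵥ A *ᵥ δ| + |δ ⬝ᵥ A *ᵥ δ| := by
        simpa [abs_mul] using abs_sub (2 * (a ⬝ᵥ A *ᵥ δ)) (δ ⬝ᵥ A *ᵥ δ)
    _ ≤ _ := by rw [abs_of_nonneg hδ, sq_sqrt hδ]; linarith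

end QuadraticForm

section EuclideanNorm

variable {d : ℕ}

lemma l2norm_eq_norm (v : Fin d → ℝ) : l2norm v = ‖WithLp.toLp 2 v‖ := by
  rw [l2norm, EuclideanSpace.norm_eq]
  simp [dotProduct, sq]

lemma l2norm_le_one_iff (v : Fin d → ℝ) : l2norm v ≤ 1 ↔ v ⬝ᵥ v ≤ 1 := sqrt_le_one

lemma opNorm_nonneg (M : Matrix (Fin d) (Fin d) ℝ) : 0 ≤ opNorm M :=
  Real.iSup_nonneg fun _ => sqrt_nonneg _

lemma norm_toEuclideanCLM_le_opNorm (M : Matrix (Fin d) (Fin d) ℝ) :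
    ‖toEuclideanCLM (𝕜 := ℝ) M‖ ≤ opNorm M := by
  have hbdd : BddAbove (Set.range fun v : {v : Fin d → ℝ // v ⬝ᵥ v ≤ 1} =>
      l2norm (M *ᵥ (v : Fin d → ℝ))) := by
    refine ⟨‖toEuclideanCLM (𝕜 := ℝ) M‖, ?_⟩
    rintro _ ⟨⟨v, hv⟩, rfl⟩
    rw [← l2norm_le_one_iff, l2norm_eq_norm] at hv
    dsimp only
    rw [l2norm_eq_norm, ← toEuclideanCLM_toLp]
    exact (toEuclideanCLM (𝕜 := ℝ) M).le_opNorm_of_le hv |>.trans_eq (mul_one _)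
  refine ContinuousLinearMap.opNorm_le_of_unit_norm (opNorm_nonneg M) fun v hv => ?_
  have hv' : v.ofLp ⬝ᵥ v.ofLp ≤ 1 := by
    rw [← l2norm_le_one_iff, l2norm_eq_norm, WithLp.toLp_ofLp, hv]
  have := le_ciSup hbdd ⟨v.ofLp, hv'⟩
  rwa [l2norm_eq_norm, ← toEuclideanCLM_toLp, WithLp.toLp_ofLp] at this

lemma abs_dotProduct_mulVec_le_opNorm (M : Matrix (Fin d) (Fin d) ℝ) (v : Fin d → ℝ) :
    |v ⬝ᵥ M *ᵥ v| ≤ opNorm M * l2norm v ^ 2 := by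
  set T := toEuclideanCLM (𝕜 := ℝ) M
  set x := WithLp.toLp 2 v
  calc |v ⬝ᵥ M *ᵥ v| = |inner ℝ x (T x)| := by rw [inner_toEuclideanCLM]
    _ ≤ ‖x‖ * ‖T x‖ := abs_real_inner_le_norm _ _
    _ ≤ ‖x‖ * (opNorm M * ‖x‖) := by
        gcongr
        exact T.le_of_opNorm_le (norm_toEuclideanCLM_le_opNorm M) x
    _ = opNorm M * l2norm v ^ 2 := by rw [l2norm_eq_norm]; ring

lemma l2norm_sub_sq_le (a δ : Fin d → ℝ) :
    l2norm (a - δ) ^ 2 ≤ 2 * (l2norm a ^ 2 + l2norm δ ^ 2) := by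
  have := parallelogram_law_with_norm ℝ (WithLp.toLp 2 a) (WithLp.toLp 2 δ)
  simp only [l2norm_eq_norm, WithLp.toLp_sub]
  nlinarith [norm_nonneg (WithLp.toLp 2 a + WithLp.toLp 2 δ)]

end EuclideanNorm

theorem stmt8_general {d : ℕ} (S Shat : Matrix (Fin d) (Fin d) ℝ)
    (hS : S.PosDef) (μ μhat x : Fin d → ℝ) :
    |(x - μ) ⬝ᵥ (S⁻¹ *ᵥ (x - μ)) - (x - μhat) ⬝ᵥ (Shat⁻¹ *ᵥ (x - μhat))| ≤
      2 * invNorm S (μhat - μ) * invNorm S (x - μ) + invNorm S (μhat - μ) ^ 2 +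
        2 * (l2norm (x - μ) ^ 2 + l2norm (μhat - μ) ^ 2) * opNorm (Shat⁻¹ - S⁻¹) := by
  set a := x - μ
  set δ := μhat - μ
  have hx : x - μhat = a - δ := by simp only [a, δ]; abel
  have hA : (S⁻¹).PosSemidef := hS.inv.posSemidef
  have hmean := hA.abs_two_mul_dotProduct_mulVec_sub_le a δ
  have hcov : |(a - δ) ⬝ᵥ (Shat⁻¹ - S⁻¹) *ᵥ (a - δ)| ≤
      2 * (l2norm a ^ 2 + l2norm δ ^ 2) * opNorm (Shat⁻¹ - S⁻¹) :=
    calc _ ≤ opNorm (Shat⁻¹ - S⁻¹) * l2norm (a - δ) ^ 2 := abs_dotProduct_mulVec_le_opNorm _ _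
      _ ≤ opNorm (Shat⁻¹ - S⁻¹) * (2 * (l2norm a ^ 2 + l2norm δ ^ 2)) := by
          gcongr
          · exact opNorm_nonneg _
          · exact l2norm_sub_sq_le a δ
      _ = _ := mul_comm _ _
  rw [hx, hA.isHermitian.dotProduct_mulVec_sub_dotProduct_mulVec_sub]
  exact (abs_sub _ _).trans (add_le_add hmean hcov)

theorem stmt8 {d : ℕ} (S Shat : Matrix (Fin d) (Fin d) ℝ)
    (hS : S.PosDef) (hShat : Shat.PosDef) (μ μhat x : Fin d → ℝ) :
    |(x - μ) ⬝ᵥ (S⁻¹ *ᵥ (x - μ)) - (x - μhat) ⬝ᵥ (Shat⁻¹ *ᵥ (x - μhat))| ≤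
      2 * invNorm S (μhat - μ) * invNorm S (x - μ) + invNorm S (μhat - μ) ^ 2 +
        2 * (l2norm (x - μ) ^ 2 + l2norm (μhat - μ) ^ 2) * opNorm (Shat⁻¹ - S⁻¹) :=
  stmt8_general S Shat hS μ μhat x
end
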